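/- Let (g,[·,·]_g) be a Lie algebra over a field K, ρ: g → gl(V) a representation, and T: V → g an embedding tensor. Fix n ≥ 1 and let f_g: g^n → g be an alternating multilinear map and f_V: g^{n−1} × V → V a map multilinear and alternating in the g-arguments. Define: (δf)_g = d_CE f_g (the Chevalley–Eilenberg coboundary of g with adjoint coefficients); (δf)_V(x₁,…,x_n,v) = Σ_{1≤i<j≤n}(−1)^i f_V(x₁,…,x̂_i,…,x_{j−1},[x_i,x_j]_g,x_{j+1},…,x_n,v) + (−1)^{n−1}ρ(f_g(x₁,…,x_n))v + Σ_{i=1}^{n}(−1)^{i+1}(ρ(x_i)f_V(x₁,…,x̂_i,…,x_n,v) − f_V(x₁,…,x̂_i,…,x_n,ρ(x_i)v)); Ω_T(f_g,f_V)(v₁,…,v_n) = (−1)^n(f_g(Tv₁,…,Tv_n) − T f_V(Tv₁,…,Tv_{n−1}, v_n)); and for a k-multilinear θ: V^k → g, ∂_T θ(u₁,…,u_{k+1}) = Σ_{i=1}^{k}(−1)^{i+1}[Tu_i, θ(u₁,…,û_i,…,u_{k+1})]_g + (−1)^{k+1}[θ(u₁,…,u_k), Tu_{k+1}]_g + (−1)^k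 T(ρ(θ(u₁,…,u_k))u_{k+1}) + Σ_{1≤i<j≤k+1}(−1)^i θ(u₁,…,û_i,…,u_{j−1}, ρ(Tu_i)u_j, u_{j+1},…,u_{k+1}). Then Ω_T(δ(f_g,f_V)) + ∂_T(Ω_T(f_g,f_V)) = 0 as multilinear maps V^{n+1} → g. -/

import Mathlib

attribute [local instance 100] LieRing.ofAssociativeRing

namespace LieLeibnizCohomology

variable (K : Type*) [Field K] {g V : Type*} [LieRing g] [LieAlgebra K g]
  [AddCommGroup V] [Module K V]

/-- The coboundary operator `∂_T` of an embedding tensor `T`, on `k`-cochains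
`θ : V^k → g`. -/
def dT (ρ : g →ₗ⁅K⁆ Module.End K V) (T : V →ₗ[K] g) {k : ℕ}
    (θ : (Fin k → V) → g) : (Fin (k + 1) → V) → g := fun u =>
  (∑ i : Fin k, ((-1 : K) ^ (i : ℕ)) •
      ⁅T (u i.castSucc), θ (fun l => u (i.castSucc.succAbove l))⁆)
    + ((-1 : K) ^ (k + 1)) • ⁅θ (fun l => u l.castSucc), T (u (Fin.last k))⁆
    + ((-1 : K) ^ k) • T (ρ (θ (fun l => u l.castSucc)) (u (Fin.last k)))
    + ∑ i : Fin (k + 1), ∑ j : Fin (k + 1),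
        if i < j then
          ((-1 : K) ^ ((i : ℕ) + 1)) •
            θ (fun l => Function.update u j (ρ (T (u i)) (u j)) (i.succAbove l))
        else 0

/-- The Chevalley–Eilenberg coboundary of the Lie algebra `g` with coefficients in
the adjoint representation, on `(m+1)`-cochains. -/
def dCE {m : ℕ} (fg : (Fin (m + 1) → g) → g) : (Fin (m + 2) → g) → g := fun x =>
  (∑ i : Fin (m + 2), ((-1 : K) ^ (i : ℕ)) • ⁅x i, fg (fun l => x (i.succAbove l))⁆)
    + ∑ i : Fin (m + 2), ∑ j : Fin (m + 2),
        if h : i < j then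
          ((-1 : K) ^ ((i : ℕ) + (j : ℕ))) •
            fg (Fin.cons ⁅x i, x j⁆ fun l : Fin m =>
              x (j.succAbove
                ((⟨(i : ℕ), lt_of_lt_of_le (Fin.lt_def.mp h)
                    (Nat.lt_succ_iff.mp j.isLt)⟩ : Fin (m + 1)).succAbove l)))
        else 0

/-- The `V`-component of the coboundary `δ` of the LieRep pair `(g, V)`. -/
def deltaV (ρ : g →ₗ⁅K⁆ Module.End K V) {m : ℕ}
    (fg : (Fin (m + 1) → g) → g) (fv : (Fin m → g) → V → V) :
    (Fin (m + 1) → g) → V → V := fun x v =>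
  (∑ i : Fin (m + 1), ∑ j : Fin (m + 1),
      if i < j then
        ((-1 : K) ^ ((i : ℕ) + 1)) •
          fv (fun l => Function.update x j ⁅x i, x j⁆ (i.succAbove l)) v
      else 0)
    + ((-1 : K) ^ m) • ρ (fg x) v
    + ∑ i : Fin (m + 1), ((-1 : K) ^ (i : ℕ)) •
        (ρ (x i) (fv (fun l => x (i.succAbove l)) v)
          - fv (fun l => x (i.succAbove l)) (ρ (x i) v))

/-- The connecting map `Ω_T`, sending an `(n+1)`-cochain pair `(f_g, f_V)` of the
LieRep pair to an `(n+1)`-cochain of the embedding tensor: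
`Ω_T(f_g,f_V)(v₁,…,v_{n+1}) = (−1)^{n+1}(f_g(Tv₁,…,Tv_{n+1}) −
T f_V(Tv₁,…,Tv_n, v_{n+1}))`. -/
def Omega (T : V →ₗ[K] g) {n : ℕ} (fg : (Fin (n + 1) → g) → g)
    (fv : (Fin n → g) → V → V) : (Fin (n + 1) → V) → g := fun v =>
  ((-1 : K) ^ (n + 1)) •
    (fg (fun l => T (v l)) - T (fv (fun l => T (v l.castSucc)) (v (Fin.last n))))

end LieLeibnizCohomology

/-!
`Ω_T(f_g, f_V)` is `(-1)^{m+1}` times the difference of the two pullbacks along `T`,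
`θ_g = f_g(T·, …, T·)` and `θ_V = T f_V(T·, …, T·, ·)`, and `∂_T` is linear. The embedding
tensor identity `⁅T u, T w⁆ = T (ρ (T u) w)` identifies `∂_T θ_g` with `(d_CE f_g)(T·, …, T·)`
up to the term `T ρ(f_g(T·, …, T·))(·)`, once the new entry `ρ(T u_i) u_j` of the Leibniz
terms is moved to the front (a sign `(-1)^{j-1}` by alternation), and `∂_T θ_V` with `T` of the
`f_V`-part of `(δf)_V`. What remains is the `ρ(f_g)`-term of `(δf)_V`, which cancels the
correction term.
-/

theorem AlternatingMap.map_update_comp_succAbove {R M N : Type*} [CommRing R] [AddCommGroup M]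
    [Module R M] [AddCommGroup N] [Module R N] {m : ℕ} (f : M [⋀^Fin (m + 1)]→ₗ[R] N)
    (y : Fin (m + 2) → M) (b : M) {i j : Fin (m + 2)} (hij : i < j) (hi : (i : ℕ) < m + 1) :
    f (fun l => Function.update y j b (i.succAbove l)) =
      (-1 : R) ^ ((j : ℕ) - 1) •
        f (Fin.cons b fun l => y (j.succAbove ((⟨i, hi⟩ : Fin (m + 1)).succAbove l))) := by
  set p := j.pred (Fin.ne_of_gt (Fin.lt_of_le_of_lt i.zero_le hij))
  have hp : i.succAbove p = j := Fin.succAbove_pred_of_lt i j hij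
  have hpi : p.predAbove i = ⟨i, hi⟩ := by
    ext
    rw [Fin.predAbove_of_le_castSucc _ _ (Fin.le_castSucc_iff.mpr (by simpa [p] using hij))]
    rfl
  have hinsert : (fun l => Function.update y j b (i.succAbove l)) =
      p.insertNth b fun l => y (j.succAbove ((⟨i, hi⟩ : Fin (m + 1)).succAbove l)) := by
    conv_lhs => rw [← hp]
    rw [Function.update_comp_eq_of_injective' _ Fin.succAbove_right_injective,
      ← Fin.insertNth_removeNth]
    congr 1
    funext l
    rw [← hp, ← hpi, Fin.succAbove_succAbove_succAbove_predAbove]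
    rfl
  rw [hinsert, map_insertNth, Fin.val_pred, ← Int.cast_smul_eq_zsmul R, Int.cast_pow,
    Int.cast_neg, Int.cast_one]
  rfl

namespace LieLeibnizCohomology

variable {K : Type*} [Field K] {g V : Type*} [LieRing g] [LieAlgebra K g]
  [AddCommGroup V] [Module K V] (ρ : g →ₗ⁅K⁆ Module.End K V) (T : V →ₗ[K] g)

theorem Omega_eq_smul_sub {n : ℕ} (fg : (Fin (n + 1) → g) → g) (fv : (Fin n → g) → V → V) :
    Omega K T fg fv = (-1 : K) ^ (n + 1) • ((fun v => fg fun l => T (v l))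
      - fun v => T (fv (fun l => T (v l.castSucc)) (v (Fin.last n)))) :=
  rfl

theorem dT_sub {k : ℕ} (θ₁ θ₂ : (Fin k → V) → g) :
    dT K ρ T (θ₁ - θ₂) = dT K ρ T θ₁ - dT K ρ T θ₂ := by
  funext u
  simp only [dT, Pi.sub_apply, lie_sub, sub_lie, map_sub, LinearMap.sub_apply, smul_sub,
    ← Finset.sum_filter, Finset.sum_sub_distrib]
  abel

theorem dT_smul {k : ℕ} (c : K) (θ : (Fin k → V) → g) : dT K ρ T (c • θ) = c • dT K ρ T θ := by
  funext u
  simp only [dT, Pi.smul_apply, lie_smul, smul_lie, map_smul, LinearMap.smul_apply, smul_add,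
    Finset.smul_sum, smul_ite, smul_zero, smul_comm c]

theorem deltaV_eq_deltaV_zero_add {m : ℕ} (fg : (Fin (m + 1) → g) → g)
    (fv : (Fin m → g) → V → V) (x : Fin (m + 1) → g) (w : V) :
    deltaV K ρ fg fv x w = deltaV K ρ 0 fv x w + (-1 : K) ^ m • ρ (fg x) w := by
  simp only [deltaV, Pi.zero_apply, map_zero, LinearMap.zero_apply, smul_zero, add_zero]
  abel

variable {ρ T}

theorem dT_comp_eq_dCE_comp_add (hT : ∀ u v : V, ⁅T u, T v⁆ = T (ρ (T u) v)) {m : ℕ}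
    (fg : g [⋀^Fin (m + 1)]→ₗ[K] g) (v : Fin (m + 2) → V) :
    dT K ρ T (fun u => fg fun l => T (u l)) v =
      dCE K fg (fun l => T (v l))
        + (-1 : K) ^ (m + 1) • T (ρ (fg fun l => T (v l.castSucc)) (v (Fin.last (m + 1)))) := by
  have hbracket :
      ∑ i : Fin (m + 2), (-1 : K) ^ (i : ℕ) • ⁅T (v i), fg fun l => T (v (i.succAbove l))⁆
        = ∑ i : Fin (m + 1), (-1 : K) ^ (i : ℕ) •
            ⁅T (v i.castSucc), fg fun l => T (v (i.castSucc.succAbove l))⁆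
          + (-1 : K) ^ (m + 1 + 1) • ⁅fg fun l => T (v l.castSucc), T (v (Fin.last (m + 1)))⁆ := by
    rw [Fin.sum_univ_castSucc, Fin.val_last, Fin.succAbove_last, ← lie_skew, smul_neg,
      ← neg_smul, pow_succ _ (m + 1), mul_neg_one]
    simp only [Fin.val_castSucc]
  have hleibniz : ∀ i j : Fin (m + 2),
      (if i < j then (-1 : K) ^ ((i : ℕ) + 1) •
          fg (fun l => T (Function.update v j (ρ (T (v i)) (v j)) (i.succAbove l))) else 0)
      = if h : i < j then (-1 : K) ^ ((i : ℕ) + (j : ℕ)) •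
          fg (Fin.cons ⁅T (v i), T (v j)⁆ fun l : Fin m =>
            T (v (j.succAbove ((⟨(i : ℕ), lt_of_lt_of_le (Fin.lt_def.mp h)
              (Nat.lt_succ_iff.mp j.isLt)⟩ : Fin (m + 1)).succAbove l)))) else 0 := by
    intro i j
    split_ifs with hij
    · have hj : 1 ≤ (j : ℕ) := lt_of_le_of_lt (Nat.zero_le _) hij
      have hpush : (fun l => T (Function.update v j (ρ (T (v i)) (v j)) (i.succAbove l))) =
          fun l => Function.update (fun k => T (v k)) j (T (ρ (T (v i)) (v j))) (i.succAbove l) :=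
        funext fun l => Function.apply_update (fun _ => T) v j _ _
      rw [hpush, fg.map_update_comp_succAbove _ _ hij
          (lt_of_lt_of_le hij (Nat.lt_succ_iff.mp j.isLt)), ← hT, smul_smul, ← pow_add,
        show (i : ℕ) + 1 + ((j : ℕ) - 1) = i + j by omega]
    · rfl
  simp only [dT, dCE, hbracket, hleibniz]
  abel

theorem dT_T_comp_eq_T_deltaV_zero (hT : ∀ u v : V, ⁅T u, T v⁆ = T (ρ (T u) v)) {m : ℕ}
    (fv : (Fin m → g) → V → V) (v : Fin (m + 2) → V) :
    dT K ρ T (fun u => T (fv (fun l => T (u l.castSucc)) (u (Fin.last m)))) v =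
      T (deltaV K ρ 0 fv (fun l => T (v l.castSucc)) (v (Fin.last (m + 1)))) := by
  -- After splitting the sums over `Fin (m + 2)` at the last index, the Leibniz terms with
  -- `j < last` and with `j = last` match the two kinds of `f_V`-terms of `deltaV`.
  simp only [dT, deltaV, Fin.sum_univ_castSucc (n := m + 1), Fin.castSucc_lt_castSucc_iff,
    Fin.castSucc_lt_last, if_true, Fin.castSucc_succAbove_castSucc,
    Fin.succAbove_ne_last_last (Fin.castSucc_lt_last _).ne, (Fin.le_last _).not_gt, if_false,
    Finset.sum_const_zero, add_zero, Function.update_apply, Fin.castSucc_inj,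
    (Fin.castSucc_lt_last _).ne, (Fin.castSucc_lt_last _).ne', apply_ite T, hT,
    Fin.val_castSucc, Pi.zero_apply, map_zero, LinearMap.zero_apply, smul_zero, map_add, map_sub,
    map_sum, map_smul, map_neg, pow_succ, mul_neg_one, neg_smul, smul_sub, Finset.sum_add_distrib,
    Finset.sum_sub_distrib, Finset.sum_neg_distrib]
  abel

end LieLeibnizCohomology

open LieLeibnizCohomology in
/-- For an embedding tensor `T` on a LieRep pair `(g, V)` and an `(m+1)`-cochain
`(f_g, f_V)` of the LieRep pair (with `f_g` alternating `(m+1)`-multilinear and `f_V`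
multilinear and alternating in its `m` `g`-arguments), one has
`Ω_T(δ(f_g,f_V)) + ∂_T(Ω_T(f_g,f_V)) = 0`. -/
theorem Omega_delta_add_dT_Omega_eq_zero
    (K : Type*) [Field K] (g V : Type*) [LieRing g] [LieAlgebra K g]
    [AddCommGroup V] [Module K V]
    (ρ : g →ₗ⁅K⁆ Module.End K V) (T : V →ₗ[K] g)
    (hT : ∀ u v : V, ⁅T u, T v⁆ = T (ρ (T u) v))
    (m : ℕ) (fg : AlternatingMap K g g (Fin (m + 1)))
    (fV : AlternatingMap K g (Module.End K V) (Fin m)) :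
    ∀ v : Fin (m + 2) → V,
      Omega K T (dCE K ⇑fg) (deltaV K ρ ⇑fg fun x w => fV x w) v
        + dT K ρ T (Omega K T ⇑fg fun x w => fV x w) v = 0 := by
  intro v
  rw [Omega_eq_smul_sub T (fg := ⇑fg), dT_smul, dT_sub, Pi.smul_apply, Pi.sub_apply,
    dT_comp_eq_dCE_comp_add hT, dT_T_comp_eq_T_deltaV_zero hT (fun x w => fV x w), Omega,
    deltaV_eq_deltaV_zero_add]
  simp only [map_add, map_smul, smul_sub, smul_add, smul_smul]
  module
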